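/- arXiv:2005.12773 — 2 statements merged into one kernel-verified Lean document; each statement's English description precedes it below -/
import Mathlib

section
/- For every bounded linear operator T on a Banach space X, the numerical radius v(T) equals the infimum over δ > 0 of v_δ(T), where v_δ(T) = sup{ |x*(Tx)| : x ∈ closed unit ball of X, x* ∈ closed unit ball of X*, Re x*(x) > 1 - δ }. -/
open Metric Set

/-- The numerical radius of a bounded linear operator `T` on a normed space `X` over `𝕜`:
`v(T) = sup { ‖x*(Tx)‖ : x ∈ S_X, x* ∈ S_{X*}, x*(x) = 1 }`. -/
noncomputable def numRadius (𝕜 : Type*) [RCLike 𝕜] {X : Type*} [NormedAddCommGroup X]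
    [NormedSpace 𝕜 X] (T : X →L[𝕜] X) : ℝ :=
  sSup {r : ℝ | ∃ (x : X) (f : X →L[𝕜] 𝕜), ‖x‖ = 1 ∧ ‖f‖ = 1 ∧ f x = 1 ∧ r = ‖f (T x)‖}

/-- The numerical index of a normed space: `n(X) = inf { v(T) : T ∈ L(X), ‖T‖ = 1 }`. -/
noncomputable def numIndex (𝕜 : Type*) [RCLike 𝕜] (X : Type*) [NormedAddCommGroup X]
    [NormedSpace 𝕜 X] : ℝ :=
  sInf {r : ℝ | ∃ T : X →L[𝕜] X, ‖T‖ = 1 ∧ r = numRadius 𝕜 T}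

/-- `v_δ(T)` computed with points taken in `A ⊆ B_X` and functionals in `B ⊆ B_{X*}`. -/
noncomputable def numRadiusDeltaOn (𝕜 : Type*) [RCLike 𝕜] {X : Type*} [NormedAddCommGroup X]
    [NormedSpace 𝕜 X] (T : X →L[𝕜] X) (A : Set X) (B : Set (X →L[𝕜] 𝕜)) (δ : ℝ) : ℝ :=
  sSup {r : ℝ | ∃ x ∈ A, ∃ f ∈ B, 1 - δ < RCLike.re (f x) ∧ r = ‖f (T x)‖}

/-- `Z` (together with the bounded bilinear map `t`) is the projective tensor product
`X ⊗̂_π Y`: it is complete, elementary tensors have norm `‖x‖‖y‖`, and the closed unit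
ball of `Z` is the closed convex hull of `B_X ⊗ B_Y`. -/
structure IsProjectiveTensorProduct (𝕜 : Type*) [RCLike 𝕜] {X Y Z : Type*}
    [NormedAddCommGroup X] [NormedSpace 𝕜 X] [NormedAddCommGroup Y] [NormedSpace 𝕜 Y]
    [NormedAddCommGroup Z] [NormedSpace 𝕜 Z] [NormedSpace ℝ Z] [IsScalarTower ℝ 𝕜 Z]
    (t : X →L[𝕜] Y →L[𝕜] Z) : Prop where
  complete : CompleteSpace Z
  norm_tmul : ∀ x y, ‖t x y‖ = ‖x‖ * ‖y‖
  ball_eq : closedBall (0 : Z) 1 = closure (convexHull ℝ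
      {z : Z | ∃ x ∈ closedBall (0 : X) 1, ∃ y ∈ closedBall (0 : Y) 1, z = t x y})

/-- `Z` (together with the bounded bilinear map `t`) is the injective tensor product
`X ⊗̂_ε Y`: it is complete, the span of elementary tensors is dense, and on that span
the norm is the injective tensor norm. -/
structure IsInjectiveTensorProduct (𝕜 : Type*) [RCLike 𝕜] {X Y Z : Type*}
    [NormedAddCommGroup X] [NormedSpace 𝕜 X] [NormedAddCommGroup Y] [NormedSpace 𝕜 Y]
    [NormedAddCommGroup Z] [NormedSpace 𝕜 Z] (t : X →L[𝕜] Y →L[𝕜] Z) : Prop where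
  complete : CompleteSpace Z
  dense_span : Dense (Submodule.span 𝕜 {z : Z | ∃ x y, z = t x y} : Set Z)
  norm_sum : ∀ (n : ℕ) (x : Fin n → X) (y : Fin n → Y),
    ‖∑ i, t (x i) (y i)‖ = sSup {r : ℝ | ∃ (f : X →L[𝕜] 𝕜) (g : Y →L[𝕜] 𝕜),
      ‖f‖ ≤ 1 ∧ ‖g‖ ≤ 1 ∧ r = ‖∑ i, f (x i) * g (y i)‖}

/-- A slice of a bounded set `A`: `{a ∈ A : Re f(a) > sup Re f(A) - δ}`. -/
def sliceOf (𝕜 : Type*) [RCLike 𝕜] {X : Type*} [NormedAddCommGroup X] [NormedSpace 𝕜 X]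
    (A : Set X) (f : X →L[𝕜] 𝕜) (δ : ℝ) : Set X :=
  {a ∈ A | sSup {r : ℝ | ∃ b ∈ A, r = RCLike.re (f b)} - δ < RCLike.re (f a)}

/-- A set `A` is slicely countably determined (SCD) if there is a countable determining
family of slices of `A`: any `B ⊆ A` meeting every slice of the family has
closed convex hull containing `A`. -/
def IsSCD (𝕜 : Type*) [RCLike 𝕜] {X : Type*} [NormedAddCommGroup X] [NormedSpace 𝕜 X]
    [NormedSpace ℝ X] [IsScalarTower ℝ 𝕜 X] (A : Set X) : Prop :=
  ∃ V : ℕ → Set X, (∀ n, ∃ (f : X →L[𝕜] 𝕜) (δ : ℝ), 0 < δ ∧ V n = sliceOf 𝕜 A f δ) ∧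
    ∀ B ⊆ A, (∀ n, (B ∩ V n).Nonempty) → A ⊆ closure (convexHull ℝ B)

/-- The Daugavet property: `‖Id + T‖ = 1 + ‖T‖` for every rank-one operator `T`. -/
def DaugavetProperty (𝕜 : Type*) [RCLike 𝕜] (X : Type*) [NormedAddCommGroup X]
    [NormedSpace 𝕜 X] : Prop :=
  ∀ T : X →L[𝕜] X, (∃ (f : X →L[𝕜] 𝕜) (x₀ : X), ∀ x, T x = f x • x₀) →
    ‖ContinuousLinearMap.id 𝕜 X + T‖ = 1 + ‖T‖

/-!
The inequality `v(T) ≤ v_δ(T)` is immediate, since every pair `(x, x*)` with `x*(x) = 1` is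
admissible for `v_δ`. Conversely, by the Bishop–Phelps–Bollobás theorem every pair
`(x, x*) ∈ B_X × B_{X*}` with `Re x*(x) > 1 - ε²` is `3ε`-close to a pair `(y, y*)` of unit vectors
with `y*(y) = 1`, so `v_{ε²}(T) ≤ v(T) + 4ε‖T‖`.

Bishop–Phelps–Bollobás reduces to real scalars by taking real parts. In the real case, Ekeland's
variational principle gives `y` near `x` at which `x*` has an `ε`-sharp maximum on `B_X`;
separating the cone `{(u, t) | ε‖u‖ < t}` from the graph of `x*` over `B_X - y` then moves `x*`
by at most `ε` to a functional attaining its norm at `y`.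
-/

theorem IsClosed.exists_ekeland_max {X : Type*} [PseudoMetricSpace X] [CompleteSpace X]
    {K : Set X} (hK : IsClosed K) {φ : X → ℝ} (hφ : Continuous φ) (hbdd : BddAbove (φ '' K))
    {ε : ℝ} (hε : 0 < ε) {x : X} (hx : x ∈ K) :
    ∃ y ∈ K, φ x + ε * dist y x ≤ φ y ∧ ∀ z ∈ K, φ z ≤ φ y + ε * dist z y := by
  -- `S w` is the upper set of `w` for the order `w ≼ z ↔ φ w + ε d(z, w) ≤ φ z`.
  let S (w : X) : Set X := {z ∈ K | φ w + ε * dist z w ≤ φ z}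
  have S_trans {w z : X} (hz : z ∈ S w) : S z ⊆ S w := fun u ⟨huK, hu⟩ =>
    ⟨huK, by nlinarith [hz.2, dist_triangle u z w]⟩
  have S_closed (w : X) : IsClosed (S w) := hK.inter (_root_.isClosed_le (by fun_prop) hφ)
  have near_sup (n : ℕ) (w : K) :
      ∃ w' : K, (w' : X) ∈ S w ∧ ∀ z ∈ S w, φ z ≤ φ w' + (1 / 2) ^ n := by
    have hne : (φ '' S w).Nonempty := ⟨φ w, w, ⟨w.2, by simp⟩, rfl⟩
    have hbdd' : BddAbove (φ '' S w) := hbdd.mono (image_mono fun z hz => hz.1)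
    obtain ⟨_, ⟨w', hw', rfl⟩, hlt⟩ :=
      exists_lt_of_lt_csSup hne (sub_lt_self _ (by positivity : (0 : ℝ) < (1 / 2) ^ n))
    exact ⟨⟨w', hw'.1⟩, hw', fun z hz => by linarith [le_csSup hbdd' (mem_image_of_mem φ hz)]⟩
  choose next next_mem next_near using near_sup
  let seq : ℕ → K := fun n => Nat.rec (motive := fun _ => K) ⟨x, hx⟩ next n
  have S_anti : Antitone fun n => S (seq n : X) :=
    antitone_nat_of_succ_le fun n =>
      S_trans (z := seq (n + 1)) (next_mem n (seq n))
  have seq_mem {m n : ℕ} (h : m ≤ n) : (seq n : X) ∈ S (seq m) :=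
    S_anti h ⟨(seq n).2, by simp⟩
  have seq_dist (n : ℕ) : dist (seq (n + 1) : X) (seq (n + 2)) ≤ 2 / ε / 2 / 2 ^ n := by
    have h₁ : φ (seq (n + 1)) + ε * dist (seq (n + 2) : X) (seq (n + 1)) ≤ φ (seq (n + 2)) :=
      (next_mem (n + 1) (seq (n + 1))).2
    have h₂ : φ (seq (n + 2)) ≤ φ (seq (n + 1)) + (1 / 2) ^ n :=
      next_near n (seq n) _ (seq_mem (Nat.le_add_right n 2))
    rw [dist_comm, show 2 / ε / 2 / 2 ^ n = (1 / 2) ^ n / ε by rw [one_div_pow]; ring,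
      le_div_iff₀ hε]
    linarith
  obtain ⟨y, hy⟩ := cauchySeq_tendsto_of_complete (cauchySeq_of_le_geometric_two seq_dist)
  have y_mem (n : ℕ) : y ∈ S (seq n) :=
    (S_closed _).mem_of_tendsto hy <|
      Filter.eventually_atTop.2 ⟨n, fun m hm => seq_mem (by omega : n ≤ m + 1)⟩
  refine ⟨y, (y_mem 0).1, (y_mem 0).2, fun z hzK => ?_⟩
  by_contra! hz
  have hzS : z ∈ S y := ⟨hzK, hz.le⟩
  have hle : φ z ≤ φ y := by
    refine le_of_forall_pos_le_add fun η hη => ?_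
    obtain ⟨n, hn⟩ := exists_pow_lt_of_lt_one hη (by norm_num : (1 / 2 : ℝ) < 1)
    have : φ z ≤ φ (seq (n + 1)) + (1 / 2) ^ n := next_near n (seq n) z (S_trans (y_mem n) hzS)
    linarith [(y_mem (n + 1)).2, mul_nonneg hε.le (dist_nonneg (x := y) (y := seq (n + 1)))]
  linarith [mul_nonneg hε.le (dist_nonneg (x := z) (y := y))]

theorem ContinuousLinearMap.exists_norm_le_isMaxOn_sub {X : Type*} [NormedAddCommGroup X]
    [NormedSpace ℝ X] (ψ : StrongDual ℝ X) {s : Set X} (hs : Convex ℝ s) {y : X} (hy : y ∈ s)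
    {ε : ℝ} (hε : 0 ≤ ε) (hψ : ∀ z ∈ s, ψ z ≤ ψ y + ε * ‖z - y‖) :
    ∃ φ : StrongDual ℝ X, ‖φ‖ ≤ ε ∧ IsMaxOn (ψ - φ) s y := by
  -- Separate the open cone above the graph of `ε ‖·‖` from the graph of `ψ` over `s - y`.
  let A : Set (X × ℝ) := {p | ε * ‖p.1‖ < p.2}
  let B : Set (X × ℝ) := (fun z => (z - y, ψ (z - y))) '' s
  have hA : Convex ℝ A := by
    simpa [A] using ((convexOn_norm (E := X) convex_univ).smul hε).convex_strict_epigraph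
  have hB : Convex ℝ B := by
    have := (hs.translate (-y)).linear_image ((LinearMap.id (R := ℝ) (M := X)).prod ψ.toLinearMap)
    simpa [B, image_image, neg_add_eq_sub] using this
  have hAB : Disjoint A B := by
    refine disjoint_left.2 fun p hpA ⟨z, hz, hp⟩ => ?_
    subst hp
    have := hψ z hz
    simp only [A, mem_ofPred_eq, map_sub] at hpA
    linarith
  obtain ⟨Φ, u, hΦA, hΦB⟩ :=
    geometric_hahn_banach_open hA (isOpen_lt (by fun_prop) continuous_snd) hB hAB
  set c := Φ (0, 1)
  have hΦ (v : X) (t : ℝ) : Φ (v, t) = Φ (v, 0) + t * c := by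
    rw [← smul_eq_mul, ← map_smul, ← map_add]
    simp
  have hu_nonpos : u ≤ 0 := by simpa using hΦB 0 ⟨y, hy, by simp⟩
  have hc : c < 0 := (hΦA (0, 1) (by simp [A])).trans_le hu_nonpos
  have hu_nonneg : 0 ≤ u := by
    by_contra! h
    have := hΦA (0, u / (2 * c)) (by simp [A]; exact div_pos_of_neg_of_neg h (by linarith))
    rw [hΦ, Prod.mk_zero_zero, map_zero, zero_add, div_mul_eq_mul_div,
      mul_div_mul_right u 2 hc.ne] at this
    linarith
  let φ : StrongDual ℝ X := (-c)⁻¹ • Φ.comp (ContinuousLinearMap.inl ℝ X ℝ)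
  have hφ_apply (v : X) : φ v = Φ (v, 0) / -c := by simp [φ, div_eq_inv_mul]
  have hφ (v : X) : φ v ≤ ε * ‖v‖ := by
    refine le_of_forall_gt_imp_ge_of_dense fun t ht => ?_
    have := hΦA (v, t) ht
    rw [hΦ] at this
    rw [hφ_apply, div_le_iff₀ (by linarith)]
    linarith
  refine ⟨φ, opNorm_le_bound _ hε fun v => abs_le.2 ⟨?_, hφ v⟩, fun z hz => ?_⟩
  · have := hφ (-v)
    rw [map_neg, norm_neg] at this
    linarith
  · have := hΦB _ ⟨z, hz, rfl⟩
    rw [hΦ] at this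
    have key : ψ (z - y) ≤ φ (z - y) := by
      rw [hφ_apply, le_div_iff₀ (by linarith)]
      linarith
    simp only [map_sub] at key
    simp only [mem_ofPred_eq, sub_apply]
    linarith

theorem ContinuousLinearMap.norm_le_apply_of_isMaxOn_closedBall {X : Type*}
    [NormedAddCommGroup X] [NormedSpace ℝ X] {ψ : StrongDual ℝ X} {y : X}
    (h : IsMaxOn ψ (closedBall 0 1) y) : ‖ψ‖ ≤ ψ y := by
  have le_of_norm_le {z : X} (hz : ‖z‖ ≤ 1) : ψ z ≤ ψ y := h (mem_closedBall_zero_iff.2 hz)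
  refine opNorm_le_of_unit_norm (by simpa using le_of_norm_le (z := 0) (by simp)) fun z hz => ?_
  rw [Real.norm_eq_abs, abs_le]
  refine ⟨?_, le_of_norm_le hz.le⟩
  exact neg_le.1 (by simpa using le_of_norm_le (z := -z) (by simp [hz]))

theorem norm_sub_inv_norm_smul_self {E : Type*} [NormedAddCommGroup E] [NormedSpace ℝ E]
    {x : E} (hx : x ≠ 0) : ‖x - ‖x‖⁻¹ • x‖ = |‖x‖ - 1| := by
  have hx' : ‖x‖ ≠ 0 := norm_ne_zero_iff.2 hx
  have hsmul : x - ‖x‖⁻¹ • x = (1 - ‖x‖⁻¹) • x := by rw [sub_smul, one_smul]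
  rw [hsmul, norm_smul, Real.norm_eq_abs]
  conv_rhs => rw [show ‖x‖ - 1 = (1 - ‖x‖⁻¹) * ‖x‖ by field_simp]
  rw [abs_mul, abs_norm]

theorem ContinuousLinearMap.apply_le_of_norm_le {X : Type*} [NormedAddCommGroup X]
    [NormedSpace ℝ X] {ψ : StrongDual ℝ X} {a : ℝ} (hψ : ‖ψ‖ ≤ a) {z : X} (hz : ‖z‖ ≤ 1) :
    ψ z ≤ a :=
  (Real.le_norm_self _).trans ((ψ.le_of_opNorm_le_of_le hψ hz).trans_eq (mul_one a))

theorem bishop_phelps_bollobas_real {X : Type*} [NormedAddCommGroup X] [NormedSpace ℝ X]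
    [CompleteSpace X] {ψ : StrongDual ℝ X} (hψ : ‖ψ‖ ≤ 1) {x : X} (hx : ‖x‖ ≤ 1) {ε : ℝ}
    (hε : 0 < ε) (hε' : ε ≤ 1 / 2) (hψx : 1 - ε ^ 2 < ψ x) :
    ∃ (y : X) (χ : StrongDual ℝ X),
      ‖y‖ = 1 ∧ ‖χ‖ = 1 ∧ χ y = 1 ∧ ‖x - y‖ ≤ ε ∧ ‖ψ - χ‖ ≤ 3 * ε := by
  have ψ_le_one {z : X} (hz : z ∈ closedBall 0 1) : ψ z ≤ 1 :=
    ψ.apply_le_of_norm_le hψ (mem_closedBall_zero_iff.1 hz)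
  obtain ⟨y, hy, hxy, hmax⟩ := isClosed_closedBall.exists_ekeland_max ψ.continuous
    ⟨1, forall_mem_image.2 fun z hz => ψ_le_one hz⟩ hε (mem_closedBall_zero_iff.2 hx)
  simp only [dist_eq_norm] at hxy hmax
  have hxy' : ‖x - y‖ ≤ ε := by
    rw [← norm_neg, neg_sub]
    nlinarith [ψ_le_one hy]
  obtain ⟨φ, hφ, hmax'⟩ := ψ.exists_norm_le_isMaxOn_sub (convex_closedBall 0 1) hy hε.le hmax
  set χ₀ := ψ - φ
  have hy' : ‖y‖ ≤ 1 := mem_closedBall_zero_iff.1 hy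
  have hχ₀y : χ₀ y = ‖χ₀‖ :=
    le_antisymm (χ₀.apply_le_of_norm_le le_rfl hy') (χ₀.norm_le_apply_of_isMaxOn_closedBall hmax')
  have hχ₀_lower : 1 - ε - ε ^ 2 < ‖χ₀‖ := by
    have hφx : φ x ≤ ε := φ.apply_le_of_norm_le hφ hx
    have : χ₀ x ≤ χ₀ y := hmax' (mem_closedBall_zero_iff.2 hx)
    simp only [χ₀, sub_apply] at this hχ₀y
    linarith
  have hχ₀_upper : ‖χ₀‖ ≤ 1 + ε := (norm_sub_le ψ φ).trans (add_le_add hψ hφ)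
  have hχ₀ : χ₀ ≠ 0 := norm_pos_iff.1 (by nlinarith)
  set χ := ‖χ₀‖⁻¹ • χ₀
  have hχ : ‖χ‖ = 1 := norm_smul_inv_norm hχ₀
  have hχy : χ y = 1 := by
    simp only [χ, smul_apply, hχ₀y, smul_eq_mul]
    exact inv_mul_cancel₀ (norm_ne_zero_iff.2 hχ₀)
  refine ⟨y, χ, le_antisymm hy' ?_, hχ, hχy, hxy', ?_⟩
  · simpa [hχ, hχy] using χ.le_opNorm y
  calc ‖ψ - χ‖ = ‖φ + (χ₀ - χ)‖ := by simp only [χ₀]; abel_nf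
    _ ≤ ε + |‖χ₀‖ - 1| :=
      (norm_add_le _ _).trans (add_le_add hφ (norm_sub_inv_norm_smul_self hχ₀).le)
    _ ≤ 3 * ε := by nlinarith [abs_le.2 (⟨by linarith, by nlinarith⟩ : _ ∧ ‖χ₀‖ - 1 ≤ ε + ε ^ 2)]

theorem bishop_phelps_bollobas {𝕜 X : Type*} [RCLike 𝕜] [NormedAddCommGroup X]
    [NormedSpace 𝕜 X] [CompleteSpace X] {f : StrongDual 𝕜 X} (hf : ‖f‖ ≤ 1) {x : X}
    (hx : ‖x‖ ≤ 1) {ε : ℝ} (hε : 0 < ε) (hε' : ε ≤ 1 / 2) (hfx : 1 - ε ^ 2 < RCLike.re (f x)) :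
    ∃ (y : X) (g : StrongDual 𝕜 X),
      ‖y‖ = 1 ∧ ‖g‖ = 1 ∧ g y = 1 ∧ ‖x - y‖ ≤ ε ∧ ‖f - g‖ ≤ 3 * ε := by
  let : NormedSpace ℝ X := NormedSpace.restrictScalars ℝ 𝕜 X
  have : IsScalarTower ℝ 𝕜 X := IsScalarTower.restrictScalars ℝ 𝕜 X
  let e := StrongDual.extendRCLikeₗᵢ (𝕜 := 𝕜) (F := X)
  obtain ⟨y, χ, hy, hχ, hχy, hxy, hfχ⟩ := bishop_phelps_bollobas_real (ψ := e.symm f)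
    (by rwa [e.symm.norm_map]) hx hε hε' (by simpa [e, StrongDual.extendRCLikeₗᵢ_symm_apply])
  have hgy : ‖e χ y‖ ≤ RCLike.re (e χ y) := by
    simpa [e, StrongDual.extendRCLikeₗᵢ_apply, hχy] using (e χ).le_of_opNorm_le_of_le
      (e.norm_map χ ▸ hχ).le hy.le
  refine ⟨y, e χ, hy, by rw [e.norm_map, hχ], ?_, hxy, ?_⟩
  · rw [RCLike.norm_le_re_iff_eq_norm.1 hgy]
    simpa [e, StrongDual.extendRCLikeₗᵢ_apply, hχy] using hgy.antisymm (RCLike.re_le_norm _)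
  · rwa [← e.apply_symm_apply f, ← map_sub, e.norm_map]

section NumericalRadius

variable {𝕜 X : Type*} [RCLike 𝕜] [NormedAddCommGroup X] [NormedSpace 𝕜 X] (T : X →L[𝕜] X)

theorem norm_apply_apply_le {f : StrongDual 𝕜 X} (hf : ‖f‖ ≤ 1) (x : X) :
    ‖f (T x)‖ ≤ ‖T‖ * ‖x‖ :=
  (f.comp T).le_of_opNorm_le_of_le
    ((f.opNorm_comp_le T).trans (mul_le_of_le_one_left (norm_nonneg T) hf)) le_rfl

theorem norm_apply_apply_sub_le {f g : StrongDual 𝕜 X} (hf : ‖f‖ ≤ 1) (x : X) {y : X}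
    (hy : ‖y‖ ≤ 1) : ‖f (T x) - g (T y)‖ ≤ ‖T‖ * (‖x - y‖ + ‖f - g‖) := by
  have hTy : ‖(f - g) (T y)‖ ≤ ‖T‖ * ‖f - g‖ :=
    ((f - g).le_of_opNorm_le_of_le le_rfl (T.le_of_opNorm_le_of_le le_rfl hy)).trans_eq (by ring)
  calc ‖f (T x) - g (T y)‖ = ‖f (T (x - y)) + (f - g) (T y)‖ := by simp
    _ ≤ ‖T‖ * (‖x - y‖ + ‖f - g‖) := (norm_add_le _ _).trans
      (by linarith [norm_apply_apply_le T hf (x - y)])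

theorem numRadius_nonneg : 0 ≤ numRadius 𝕜 T :=
  Real.sSup_nonneg fun _ ⟨_, _, _, _, _, hr⟩ => hr ▸ norm_nonneg _

theorem norm_apply_apply_le_numRadius {x : X} (hx : ‖x‖ = 1) {f : StrongDual 𝕜 X} (hf : ‖f‖ = 1)
    (hfx : f x = 1) : ‖f (T x)‖ ≤ numRadius 𝕜 T :=
  le_csSup ⟨‖T‖, fun _ ⟨x, f, hx, hf, _, hr⟩ =>
    hr ▸ (norm_apply_apply_le T hf.le x).trans_eq (by rw [hx, mul_one])⟩
    ⟨x, f, hx, hf, hfx, rfl⟩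

theorem numRadius_le_numRadiusDeltaOn {δ : ℝ} (hδ : 0 < δ) :
    numRadius 𝕜 T ≤ numRadiusDeltaOn 𝕜 T (closedBall 0 1) (closedBall 0 1) δ := by
  have hbdd : BddAbove {r : ℝ | ∃ x ∈ closedBall (0 : X) 1, ∃ f ∈ closedBall (0 : StrongDual 𝕜 X) 1,
      1 - δ < RCLike.re (f x) ∧ r = ‖f (T x)‖} :=
    ⟨‖T‖, fun _ ⟨x, hx, f, hf, _, hr⟩ =>
      hr ▸ (norm_apply_apply_le T (mem_closedBall_zero_iff.1 hf) x).trans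
        (mul_le_of_le_one_right (norm_nonneg T) (mem_closedBall_zero_iff.1 hx))⟩
  refine Real.sSup_le (fun r ⟨x, f, hx, hf, hfx, hr⟩ =>
      le_csSup hbdd ⟨x, by simp [hx], f, by simp [hf], ?_, hr⟩)
    (Real.sSup_nonneg fun _ ⟨_, _, _, _, _, hr⟩ => hr ▸ norm_nonneg _)
  simpa [hfx]

theorem numRadiusDeltaOn_sq_le [CompleteSpace X] {ε : ℝ} (hε : 0 < ε) (hε' : ε ≤ 1 / 2) :
    numRadiusDeltaOn 𝕜 T (closedBall 0 1) (closedBall 0 1) (ε ^ 2) ≤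
      numRadius 𝕜 T + 4 * ε * ‖T‖ := by
  refine Real.sSup_le (fun r ⟨x, hx, f, hf, hfx, hr⟩ => ?_) (by positivity [numRadius_nonneg T])
  rw [mem_closedBall_zero_iff] at hx hf
  obtain ⟨y, g, hy, hg, hgy, hxy, hfg⟩ := bishop_phelps_bollobas hf hx hε hε' hfx
  calc r ≤ ‖g (T y)‖ + ‖f (T x) - g (T y)‖ := hr ▸ norm_le_norm_add_norm_sub' _ _
    _ ≤ numRadius 𝕜 T + ‖T‖ * (ε + 3 * ε) := add_le_add (norm_apply_apply_le_numRadius T hy hg hgy)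
      ((norm_apply_apply_sub_le T hf x hy.le).trans (by gcongr))
    _ = numRadius 𝕜 T + 4 * ε * ‖T‖ := by ring

end NumericalRadius

/-- For every bounded linear operator `T` on a Banach space `X`,
`v(T) = inf_{δ>0} v_δ(T)`. -/
theorem numRadius_eq_sInf_numRadiusDelta {𝕜 X : Type*} [RCLike 𝕜] [NormedAddCommGroup X]
    [NormedSpace 𝕜 X] [CompleteSpace X] (T : X →L[𝕜] X) :
    numRadius 𝕜 T = sInf {r : ℝ | ∃ δ : ℝ, 0 < δ ∧
      r = numRadiusDeltaOn 𝕜 T (closedBall 0 1) (closedBall 0 1) δ} := by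
  set I := {r : ℝ | ∃ δ : ℝ, 0 < δ ∧
    r = numRadiusDeltaOn 𝕜 T (closedBall 0 1) (closedBall 0 1) δ}
  have lower : ∀ r ∈ I, numRadius 𝕜 T ≤ r :=
    fun _ ⟨δ, hδ, hr⟩ => hr ▸ numRadius_le_numRadiusDeltaOn T hδ
  refine le_antisymm (le_csInf ⟨_, 1, one_pos, rfl⟩ lower) (le_of_forall_pos_le_add fun η hη => ?_)
  set ε := min (η / (4 * ‖T‖ + 1)) (1 / 2)
  have hε : 0 < ε := by positivity
  have hεT : 4 * ε * ‖T‖ ≤ η := by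
    have := (le_div_iff₀ (by positivity)).1 (min_le_left (η / (4 * ‖T‖ + 1)) (1 / 2))
    linarith
  calc _ ≤ numRadiusDeltaOn 𝕜 T (closedBall 0 1) (closedBall 0 1) (ε ^ 2) :=
        csInf_le ⟨_, lower⟩ ⟨ε ^ 2, by positivity, rfl⟩
    _ ≤ numRadius 𝕜 T + 4 * ε * ‖T‖ := numRadiusDeltaOn_sq_le T hε (min_le_right _ _)
    _ ≤ numRadius 𝕜 T + η := by linarith
end

section
/- Let X, Y be Banach spaces, let S ∈ L(X) be a rank-one operator, and let T ∈ L(Y) be an operator such that T(B_Y) is a slicely countably determined set. Then (S ⊗_π T)(B_{X⊗̂_π Y}) is a slicely countably determined subset of X ⊗̂_π Y, i.e., S ⊗_π T is an SCD-operator. -/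
open Metric Set

section Aux
variable {𝕜 : Type*} [RCLike 𝕜]

lemma norm_le_of_mem_closure {X : Type*} [NormedAddCommGroup X]
    {A : Set X} {R : ℝ} (hR : ∀ a ∈ A, ‖a‖ ≤ R) : ∀ b ∈ closure A, ‖b‖ ≤ R := by
  have h : closure A ⊆ {x : X | ‖x‖ ≤ R} :=
    closure_minimal hR (isClosed_le continuous_norm continuous_const)
  exact fun b hb => h hb

lemma bddAbove_supSet {X : Type*} [NormedAddCommGroup X] [NormedSpace 𝕜 X]
    {A : Set X} {R : ℝ} (hR : ∀ a ∈ A, ‖a‖ ≤ R) (g : X →L[𝕜] 𝕜) :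
    BddAbove {r : ℝ | ∃ b ∈ A, r = RCLike.re (g b)} := by
  refine ⟨‖g‖ * R, ?_⟩
  rintro r ⟨b, hb, rfl⟩
  calc RCLike.re (g b) ≤ ‖g b‖ := RCLike.re_le_norm _
    _ ≤ ‖g‖ * ‖b‖ := g.le_opNorm b
    _ ≤ ‖g‖ * R := by
        have := hR b hb
        exact mul_le_mul_of_nonneg_left this (norm_nonneg g)

lemma supRe_closure {X : Type*} [NormedAddCommGroup X] [NormedSpace 𝕜 X]
    {A : Set X} (hne : A.Nonempty) {R : ℝ} (hR : ∀ a ∈ A, ‖a‖ ≤ R) (g : X →L[𝕜] 𝕜) :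
    sSup {r : ℝ | ∃ b ∈ closure A, r = RCLike.re (g b)} =
    sSup {r : ℝ | ∃ b ∈ A, r = RCLike.re (g b)} := by
  obtain ⟨a₀, ha₀⟩ := hne
  have bddA := bddAbove_supSet (𝕜 := 𝕜) hR g
  have bddC := bddAbove_supSet (𝕜 := 𝕜) (norm_le_of_mem_closure hR) g
  refine le_antisymm ?_ ?_
  · refine csSup_le ⟨_, ⟨a₀, subset_closure ha₀, rfl⟩⟩ ?_
    rintro r ⟨b, hb, rfl⟩
    have hsub : A ⊆ {x : X | RCLike.re (g x) ≤
        sSup {r : ℝ | ∃ b ∈ A, r = RCLike.re (g b)}} := by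
      intro a ha; exact le_csSup bddA ⟨a, ha, rfl⟩
    have hcl : closure A ⊆ _ := closure_minimal hsub
      (isClosed_le (RCLike.continuous_re.comp g.continuous) continuous_const)
    exact hcl hb
  · exact csSup_le_csSup bddC ⟨_, ⟨a₀, ha₀, rfl⟩⟩
      (fun r ⟨b, hb, h⟩ => ⟨b, subset_closure hb, h⟩)

end Aux

section Aux2
variable {𝕜 : Type*} [RCLike 𝕜]
variable {X : Type*} [NormedAddCommGroup X] [NormedSpace 𝕜 X]
    [NormedSpace ℝ X] [IsScalarTower ℝ 𝕜 X]
variable {Z : Type*} [NormedAddCommGroup Z] [NormedSpace 𝕜 Z]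
    [NormedSpace ℝ Z] [IsScalarTower ℝ 𝕜 Z]

/-- Image of an SCD set under an operator whose functionals lift. -/
lemma isSCD_image (L : X →L[𝕜] Z) {A : Set X} (hA : IsSCD 𝕜 A)
    (hlift : ∀ g : X →L[𝕜] 𝕜, ∃ φ : Z →L[𝕜] 𝕜, ∀ y, φ (L y) = g y) :
    IsSCD 𝕜 (⇑L '' A) := by
  obtain ⟨V, hV, hdet⟩ := hA
  choose g δ hδ hVeq using hV
  choose φ hφ using fun n => hlift (g n)
  refine ⟨fun n => sliceOf 𝕜 (⇑L '' A) (φ n) (δ n), fun n => ⟨φ n, δ n, hδ n, rfl⟩, ?_⟩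
  intro B hB hmeet
  have hsetEq : ∀ n, {r : ℝ | ∃ b ∈ ⇑L '' A, r = RCLike.re (φ n b)} =
      {r : ℝ | ∃ a ∈ A, r = RCLike.re (g n a)} := by
    intro n; ext r
    constructor
    · rintro ⟨b, ⟨a, ha, rfl⟩, rfl⟩; exact ⟨a, ha, by rw [hφ]⟩
    · rintro ⟨a, ha, rfl⟩; exact ⟨L a, ⟨a, ha, rfl⟩, by rw [hφ]⟩
  set B' : Set X := {a ∈ A | L a ∈ B} with hB'
  have hmeet' : ∀ n, (B' ∩ V n).Nonempty := by
    intro n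
    obtain ⟨b, hbB, hbA, hbs⟩ := hmeet n
    obtain ⟨a, ha, rfl⟩ := hbA
    refine ⟨a, ⟨ha, hbB⟩, ?_⟩
    rw [hVeq n]
    refine ⟨ha, ?_⟩
    rw [← hsetEq n, ← hφ n a]
    exact hbs
  have h1 : A ⊆ closure (convexHull ℝ B') := hdet B' (fun a ha => ha.1) hmeet'
  rintro z ⟨a, ha, rfl⟩
  have h2 : L a ∈ ⇑L '' closure (convexHull ℝ B') := ⟨a, h1 ha, rfl⟩
  have h3 : ⇑L '' closure (convexHull ℝ B') ⊆ closure (⇑L '' convexHull ℝ B') :=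
    image_closure_subset_closure_image L.continuous
  have h4 : ⇑L '' convexHull ℝ B' = convexHull ℝ (⇑L '' B') := by
    have := (L.toLinearMap.restrictScalars ℝ).image_convexHull B'
    simpa using this
  have h5 : ⇑L '' B' ⊆ B := by rintro w ⟨a', ha', rfl⟩; exact ha'.2
  have h6 : closure (⇑L '' convexHull ℝ B') ⊆ closure (convexHull ℝ B) := by
    rw [h4]; exact closure_mono (convexHull_mono h5)
  exact h6 (h3 h2)

/-- SCD passes to the closure. -/
lemma isSCD_closure {A : Set X} (hne : A.Nonempty) {R : ℝ} (hR : ∀ a ∈ A, ‖a‖ ≤ R)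
    (hA : IsSCD 𝕜 A) : IsSCD 𝕜 (closure A) := by
  obtain ⟨V, hV, hdet⟩ := hA
  choose g δ hδ hVeq using hV
  refine ⟨fun n => sliceOf 𝕜 (closure A) (g n) (δ n / 2),
    fun n => ⟨g n, δ n / 2, half_pos (hδ n), rfl⟩, ?_⟩
  intro B hB hmeet
  suffices h : A ⊆ closure (convexHull ℝ B) by
    exact closure_minimal h isClosed_closure
  have hsup : ∀ n, sSup {r : ℝ | ∃ b ∈ closure A, r = RCLike.re (g n b)} =
      sSup {r : ℝ | ∃ b ∈ A, r = RCLike.re (g n b)} :=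
    fun n => supRe_closure hne hR (g n)
  rw [closure_eq_iInter_cthickening (convexHull ℝ B)]
  rw [subset_iInter₂_iff]
  intro η hη
  set B' : Set X := {c ∈ A | ∃ b ∈ B, dist c b ≤ η} with hB'def
  have hmeet' : ∀ n, (B' ∩ V n).Nonempty := by
    intro n
    obtain ⟨b, hbB, hbcl, hbs⟩ := hmeet n
    set ε : ℝ := min η (δ n / (2 * (‖g n‖ + 1))) with hε
    have hεpos : 0 < ε := lt_min hη (div_pos (hδ n) (by positivity))
    obtain ⟨c, hc, hcd⟩ : ∃ c ∈ A, dist b c < ε := by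
      rw [Metric.mem_closure_iff] at hbcl
      exact hbcl ε hεpos
    refine ⟨c, ⟨hc, ⟨b, hbB, by rw [dist_comm] at hcd; exact hcd.le.trans (min_le_left _ _)⟩⟩, ?_⟩
    rw [hVeq n]
    refine ⟨hc, ?_⟩
    have hlip : |RCLike.re (g n c) - RCLike.re (g n b)| ≤ ‖g n‖ * dist b c := by
      have h1 : RCLike.re (g n c) - RCLike.re (g n b) = RCLike.re (g n c - g n b) := by
        rw [map_sub]
      rw [h1, ← map_sub]
      calc |RCLike.re (g n (c - b))| ≤ ‖g n (c - b)‖ := RCLike.abs_re_le_norm _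
        _ ≤ ‖g n‖ * ‖c - b‖ := (g n).le_opNorm _
        _ = ‖g n‖ * dist b c := by rw [dist_comm, dist_eq_norm]
    have hsmall : ‖g n‖ * dist b c < δ n / 2 := by
      have h2 : dist b c < δ n / (2 * (‖g n‖ + 1)) := hcd.trans_le (min_le_right _ _)
      have h3 : ‖g n‖ * dist b c ≤ (‖g n‖ + 1) * dist b c :=
        mul_le_mul_of_nonneg_right (by linarith [norm_nonneg (g n)]) dist_nonneg
      have h4 : (‖g n‖ + 1) * dist b c < (‖g n‖ + 1) * (δ n / (2 * (‖g n‖ + 1))) :=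
        mul_lt_mul_of_pos_left h2 (by positivity)
      have h5 : (‖g n‖ + 1) * (δ n / (2 * (‖g n‖ + 1))) = δ n / 2 := by
        field_simp
      linarith
    have hb' : sSup {r : ℝ | ∃ b ∈ A, r = RCLike.re (g n b)} - δ n / 2 < RCLike.re (g n b) := by
      rw [← hsup n]; exact hbs
    have : RCLike.re (g n b) - RCLike.re (g n c) ≤ |RCLike.re (g n c) - RCLike.re (g n b)| := by
      rw [abs_sub_comm]; exact le_abs_self _
    linarith
  have h1 : A ⊆ closure (convexHull ℝ B') := hdet B' (fun a ha => ha.1) hmeet'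
  have hW : Convex ℝ (cthickening η (convexHull ℝ B)) := (convex_convexHull ℝ B).cthickening η
  have hB'sub : B' ⊆ cthickening η (convexHull ℝ B) := by
    rintro c ⟨-, b, hbB, hd⟩
    exact mem_cthickening_of_dist_le c b η _ (subset_convexHull ℝ B hbB) hd
  have h2 : closure (convexHull ℝ B') ⊆ cthickening η (convexHull ℝ B) :=
    closure_minimal (convexHull_min hB'sub hW) (isClosed_cthickening)
  exact fun a ha => h2 (h1 ha)

/-- SCD passes from the closure back to the set. -/
lemma isSCD_of_closure {A : Set X} (hne : A.Nonempty) {R : ℝ} (hR : ∀ a ∈ A, ‖a‖ ≤ R)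
    (hA : IsSCD 𝕜 (closure A)) : IsSCD 𝕜 A := by
  obtain ⟨V, hV, hdet⟩ := hA
  choose g δ hδ hVeq using hV
  refine ⟨fun n => sliceOf 𝕜 A (g n) (δ n), fun n => ⟨g n, δ n, hδ n, rfl⟩, ?_⟩
  intro B hB hmeet
  have hsub : ∀ n, sliceOf 𝕜 A (g n) (δ n) ⊆ V n := by
    intro n a ⟨ha, has⟩
    rw [hVeq n]
    exact ⟨subset_closure ha, by rw [supRe_closure hne hR (g n)]; exact has⟩
  have h := hdet B (fun b hb => subset_closure (hB hb)) (fun n => by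
    obtain ⟨b, hb1, hb2⟩ := hmeet n
    exact ⟨b, hb1, hsub n hb2⟩)
  exact fun a ha => h (subset_closure ha)

/-- A singleton is SCD. -/
lemma isSCD_singleton (z : X) : IsSCD 𝕜 ({z} : Set X) := by
  refine ⟨fun _ => sliceOf 𝕜 {z} 0 1, fun n => ⟨0, 1, one_pos, rfl⟩, ?_⟩
  intro B hB hmeet
  obtain ⟨b, hbB, hbz, -⟩ := hmeet 0
  rcases hbz with rfl
  intro a ha
  rcases ha with rfl
  exact subset_closure (subset_convexHull ℝ B hbB)

end Aux2

section Lift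
variable {𝕜 : Type*} [RCLike 𝕜]
variable {X : Type*} [NormedAddCommGroup X] [NormedSpace 𝕜 X]
variable {Z : Type*} [NormedAddCommGroup Z] [NormedSpace 𝕜 Z]

/-- Functionals lift through an into-isomorphism (Hahn–Banach). -/
lemma exists_lift_of_norm_eq (L : X →L[𝕜] Z) {c : ℝ} (hc : 0 < c)
    (hL : ∀ y, ‖L y‖ = c * ‖y‖) (g : X →L[𝕜] 𝕜) :
    ∃ φ : Z →L[𝕜] 𝕜, ∀ y, φ (L y) = g y := by
  have hinj : Function.Injective L := by
    intro y y' h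
    have h0 : L (y - y') = 0 := by rw [map_sub, h, sub_self]
    have := hL (y - y')
    rw [h0, norm_zero] at this
    have hyy : ‖y - y'‖ = 0 := by
      rcases mul_eq_zero.mp this.symm with h' | h'
      · exact absurd h' hc.ne'
      · exact h'
    rw [← sub_eq_zero]
    exact norm_eq_zero.mp hyy
  have hinj' : Function.Injective L.toLinearMap := hinj
  let p : Subspace 𝕜 Z := LinearMap.range L.toLinearMap
  let e : X ≃ₗ[𝕜] p := LinearEquiv.ofInjective L.toLinearMap hinj'
  have hcoe : ∀ y : X, ((e y : p) : Z) = L y := fun y =>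
    LinearEquiv.ofInjective_apply L.toLinearMap (h := hinj') y
  have hsymm : ∀ y : X, e.symm (e y) = y := fun y => e.symm_apply_apply y
  let ψ : p →ₗ[𝕜] 𝕜 := g.toLinearMap ∘ₗ (e.symm : p →ₗ[𝕜] X)
  have hbound : ∀ z : p, ‖ψ z‖ ≤ (‖g‖ / c) * ‖z‖ := by
    intro z
    have hz : ((z : Z)) = L (e.symm z) := by
      rw [← hcoe (e.symm z), e.apply_symm_apply]
    have hnz : ‖(z : Z)‖ = c * ‖e.symm z‖ := by rw [hz, hL]
    have : ‖ψ z‖ = ‖g (e.symm z)‖ := rfl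
    rw [this]
    calc ‖g (e.symm z)‖ ≤ ‖g‖ * ‖e.symm z‖ := g.le_opNorm _
      _ = (‖g‖ / c) * (c * ‖e.symm z‖) := by field_simp
      _ = (‖g‖ / c) * ‖(z : Z)‖ := by rw [hnz]
  let ψc : p →L[𝕜] 𝕜 := ψ.mkContinuous (‖g‖ / c) hbound
  obtain ⟨φ, hφ, -⟩ := exists_extension_norm_eq p ψc
  refine ⟨φ, fun y => ?_⟩
  have hmem : L y ∈ p := ⟨y, rfl⟩
  have h1 : φ (L y) = ψc ⟨L y, hmem⟩ := hφ ⟨L y, hmem⟩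
  have h2 : (⟨L y, hmem⟩ : p) = e y := by
    apply Subtype.ext
    exact (hcoe y).symm
  rw [h1, h2]
  show g (e.symm (e y)) = g y
  rw [hsymm]
end Lift

/-- If `S ∈ L(X)` is rank-one and `T ∈ L(Y)` is an SCD-operator, then
`S ⊗_π T` (the operator `U` on `X ⊗̂_π Y` with `U(x ⊗ y) = Sx ⊗ Ty`) is an SCD-operator. -/
theorem isSCD_image_rankOne_tensor_SCD {𝕜 X Y Z : Type*} [RCLike 𝕜]
    [NormedAddCommGroup X] [NormedSpace 𝕜 X] [CompleteSpace X]
    [NormedAddCommGroup Y] [NormedSpace 𝕜 Y] [CompleteSpace Y]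
    [NormedSpace ℝ Y] [IsScalarTower ℝ 𝕜 Y]
    [NormedAddCommGroup Z] [NormedSpace 𝕜 Z] [NormedSpace ℝ Z] [IsScalarTower ℝ 𝕜 Z]
    (t : X →L[𝕜] Y →L[𝕜] Z) (ht : IsProjectiveTensorProduct 𝕜 t)
    (S : X →L[𝕜] X) (hS : ∃ (f : X →L[𝕜] 𝕜) (x₀ : X), ∀ x, S x = f x • x₀)
    (T : Y →L[𝕜] Y) (hT : IsSCD 𝕜 (⇑T '' closedBall 0 1))
    (U : Z →L[𝕜] Z) (hU : ∀ x y, U (t x y) = t (S x) (T y)) :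
    IsSCD 𝕜 (⇑U '' closedBall 0 1) := by
  classical
  obtain ⟨f, x₀, hSf⟩ := hS
  by_cases hS0 : ∀ x : X, S x = 0
  · -- degenerate case : `U` vanishes on the unit ball
    have hEK : {z : Z | ∃ x ∈ closedBall (0 : X) 1, ∃ y ∈ closedBall (0 : Y) 1, z = t x y}
        ⊆ ⇑U ⁻¹' {0} := by
      rintro w ⟨x, hx, y, hy, rfl⟩
      have : U (t x y) = t (S x) (T y) := hU x y
      rw [hS0 x] at this
      simp only [mem_preimage, mem_singleton_iff, this, map_zero,
        ContinuousLinearMap.zero_apply]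
    have hKconv : Convex ℝ (⇑U ⁻¹' {0}) := by
      have := (convex_singleton (0 : Z)).linear_preimage (U.toLinearMap.restrictScalars ℝ)
      simpa using this
    have hKclosed : IsClosed (⇑U ⁻¹' {0}) := isClosed_singleton.preimage U.continuous
    have hU0 : ∀ z ∈ closedBall (0 : Z) 1, U z = 0 := by
      intro z hz
      rw [ht.ball_eq] at hz
      have := closure_minimal (convexHull_min hEK hKconv) hKclosed hz
      simpa using this
    have hA : ⇑U '' closedBall 0 1 = {0} := by
      apply Subset.antisymm
      · rintro a ⟨z, hz, rfl⟩
        simp [hU0 z hz]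
      · rintro a rfl
        exact ⟨0, mem_closedBall_self zero_le_one, map_zero U⟩
    rw [hA]
    exact isSCD_singleton 0
  · push_neg at hS0
    obtain ⟨xw, hxw⟩ := hS0
    have hx₀ : x₀ ≠ 0 := by
      intro h; exact hxw (by rw [hSf, h, smul_zero])
    have hfxw : f xw ≠ 0 := by
      intro h; exact hxw (by rw [hSf, h, zero_smul])
    have hf0 : f ≠ 0 := by
      intro h
      rw [h] at hfxw
      exact hfxw rfl
    have hr : 0 < ‖f‖ := norm_pos_iff.mpr hf0
    set r : ℝ := ‖f‖ with hrdef
    have hr0 : ((r : 𝕜)) ≠ 0 := by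
      simpa using (RCLike.ofReal_ne_zero (K := 𝕜)).mpr hr.ne'
    set L : Y →L[𝕜] Z := ((r : 𝕜)) • (t x₀) with hLdef
    have hLapp : ∀ y : Y, L y = (r : 𝕜) • (t x₀ y) := fun y => rfl
    set c₀ : ℝ := r * ‖x₀‖ with hc₀def
    have hc₀ : 0 < c₀ := mul_pos hr (norm_pos_iff.mpr hx₀)
    have hLnorm : ∀ y : Y, ‖L y‖ = c₀ * ‖y‖ := by
      intro y
      rw [hLapp, norm_smul, ht.norm_tmul, RCLike.norm_ofReal, abs_of_pos hr, hc₀def, mul_assoc]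
    set AT : Set Y := ⇑T '' closedBall 0 1 with hATdef
    have hATconv : Convex ℝ AT := by
      have := (convex_closedBall (0 : Y) 1).linear_image (T.toLinearMap.restrictScalars ℝ)
      simpa using this
    have hD : IsSCD 𝕜 (⇑L '' AT) :=
      isSCD_image L hT (fun g => exists_lift_of_norm_eq L hc₀ hLnorm g)
    have hDconv : Convex ℝ (⇑L '' AT) := by
      have := hATconv.linear_image (L.toLinearMap.restrictScalars ℝ)
      simpa using this
    have hDne : (⇑L '' AT).Nonempty :=
      ⟨L (T 0), T 0, ⟨0, mem_closedBall_self zero_le_one, rfl⟩, rfl⟩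
    have hDR : ∀ d ∈ ⇑L '' AT, ‖d‖ ≤ c₀ * ‖T‖ := by
      rintro d ⟨w, ⟨y, hy, rfl⟩, rfl⟩
      rw [hLnorm]
      have h1 : ‖T y‖ ≤ ‖T‖ * ‖y‖ := T.le_opNorm y
      have h2 : ‖y‖ ≤ 1 := by rwa [mem_closedBall_zero_iff] at hy
      calc c₀ * ‖T y‖ ≤ c₀ * (‖T‖ * ‖y‖) := mul_le_mul_of_nonneg_left h1 hc₀.le
        _ ≤ c₀ * (‖T‖ * 1) := by
            exact mul_le_mul_of_nonneg_left (mul_le_mul_of_nonneg_left h2 (norm_nonneg T)) hc₀.le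
        _ = c₀ * ‖T‖ := by ring
    have hAne : (⇑U '' closedBall 0 1).Nonempty :=
      ⟨U 0, 0, mem_closedBall_self zero_le_one, rfl⟩
    have hAR : ∀ a ∈ ⇑U '' closedBall 0 1, ‖a‖ ≤ ‖U‖ := by
      rintro a ⟨z, hz, rfl⟩
      have h1 : ‖z‖ ≤ 1 := by rwa [mem_closedBall_zero_iff] at hz
      calc ‖U z‖ ≤ ‖U‖ * ‖z‖ := U.le_opNorm z
        _ ≤ ‖U‖ * 1 := mul_le_mul_of_nonneg_left h1 (norm_nonneg U)
        _ = ‖U‖ := mul_one _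
    -- inclusion 1 : the image of the unit ball is in the closure of `L '' AT`
    have hUE : ⇑U '' {z : Z | ∃ x ∈ closedBall (0 : X) 1, ∃ y ∈ closedBall (0 : Y) 1, z = t x y}
        ⊆ ⇑L '' AT := by
      rintro w ⟨e, ⟨x, hx, y, hy, rfl⟩, rfl⟩
      have hx1 : ‖x‖ ≤ 1 := by rwa [mem_closedBall_zero_iff] at hx
      have hy1 : ‖y‖ ≤ 1 := by rwa [mem_closedBall_zero_iff] at hy
      set y' : Y := ((f x) / (r : 𝕜)) • y with hy'def
      have hfxr : ‖f x‖ ≤ r := by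
        calc ‖f x‖ ≤ ‖f‖ * ‖x‖ := f.le_opNorm x
          _ ≤ ‖f‖ * 1 := mul_le_mul_of_nonneg_left hx1 (norm_nonneg f)
          _ = r := by rw [mul_one]
      have hy'1 : ‖y'‖ ≤ 1 := by
        rw [hy'def, norm_smul, norm_div, RCLike.norm_ofReal, abs_of_pos hr]
        have h3 : ‖f x‖ / r ≤ 1 := (div_le_one hr).mpr hfxr
        exact mul_le_one₀ h3 (norm_nonneg y) hy1
      refine ⟨T y', ⟨y', mem_closedBall_zero_iff.mpr hy'1, rfl⟩, ?_⟩
      have hrhs : U (t x y) = f x • ((t x₀) (T y)) := by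
        rw [hU x y, hSf x, map_smul, ContinuousLinearMap.smul_apply]
      have hlhs : L (T y') = f x • ((t x₀) (T y)) := by
        rw [hLapp, hy'def]
        simp only [map_smul, smul_smul]
        rw [mul_div_cancel₀ _ hr0]
      rw [hlhs, hrhs]
    have incl1 : ⇑U '' closedBall 0 1 ⊆ closure (⇑L '' AT) := by
      rintro a ⟨z, hz, rfl⟩
      rw [ht.ball_eq] at hz
      have h2 : U z ∈ closure (⇑U '' convexHull ℝ
          {z : Z | ∃ x ∈ closedBall (0 : X) 1, ∃ y ∈ closedBall (0 : Y) 1, z = t x y}) :=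
        image_closure_subset_closure_image U.continuous ⟨z, hz, rfl⟩
      have h3 : ⇑U '' convexHull ℝ
          {z : Z | ∃ x ∈ closedBall (0 : X) 1, ∃ y ∈ closedBall (0 : Y) 1, z = t x y}
          = convexHull ℝ (⇑U '' {z : Z | ∃ x ∈ closedBall (0 : X) 1,
              ∃ y ∈ closedBall (0 : Y) 1, z = t x y}) := by
        have := (U.toLinearMap.restrictScalars ℝ).image_convexHull
          {z : Z | ∃ x ∈ closedBall (0 : X) 1, ∃ y ∈ closedBall (0 : Y) 1, z = t x y}
        simpa using this
      rw [h3] at h2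
      have h4 := convexHull_min hUE hDconv
      exact closure_mono h4 h2
    -- inclusion 2 : `L '' AT` is in the closure of the image of the unit ball
    have incl2 : ⇑L '' AT ⊆ closure (⇑U '' closedBall 0 1) := by
      rintro d ⟨w, ⟨y, hy, rfl⟩, rfl⟩
      have hy1 : ‖y‖ ≤ 1 := by rwa [mem_closedBall_zero_iff] at hy
      have hkey : L (T y) = t x₀ ((r : 𝕜) • T y) := by
        rw [hLapp, map_smul]
      have htends : Filter.Tendsto (fun ρ : ℝ => t x₀ ((ρ : 𝕜) • T y))
          (nhdsWithin r (Iio r)) (nhds (L (T y))) := by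
        rw [hkey]
        have hcont : Continuous (fun ρ : ℝ => t x₀ ((ρ : 𝕜) • T y)) :=
          (t x₀).continuous.comp (RCLike.continuous_ofReal.smul continuous_const)
        exact (hcont.tendsto r).mono_left nhdsWithin_le_nhds
      refine mem_closure_of_tendsto htends ?_
      filter_upwards [Ioo_mem_nhdsLT hr] with ρ hρ
      obtain ⟨x₁, hx₁, hfx₁⟩ := f.exists_lt_apply_of_lt_opNorm hρ.2
      have hfx₁0 : f x₁ ≠ 0 := by
        intro h
        rw [h, norm_zero] at hfx₁
        linarith [hρ.1]
      set x : X := ((ρ : 𝕜) / f x₁) • x₁ with hxdef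
      have hxn : ‖x‖ ≤ 1 := by
        rw [hxdef, norm_smul, norm_div, RCLike.norm_ofReal, abs_of_pos hρ.1]
        have h5 : ρ / ‖f x₁‖ ≤ 1 :=
          (div_le_one (lt_trans hρ.1 hfx₁)).mpr hfx₁.le
        exact mul_le_one₀ h5 (norm_nonneg x₁) hx₁.le
      have hz : t x y ∈ closedBall (0 : Z) 1 := by
        rw [mem_closedBall_zero_iff, ht.norm_tmul]
        exact mul_le_one₀ hxn (norm_nonneg y) hy1
      refine ⟨t x y, hz, ?_⟩
      have hfx : f x = (ρ : 𝕜) := by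
        rw [hxdef, map_smul, smul_eq_mul, div_mul_cancel₀ _ hfx₁0]
      rw [hU x y, hSf x, hfx]
      simp only [map_smul, ContinuousLinearMap.smul_apply]
    have hcl : closure (⇑L '' AT) = closure (⇑U '' closedBall 0 1) :=
      Subset.antisymm (closure_minimal incl2 isClosed_closure)
        (closure_minimal incl1 isClosed_closure)
    have h1 : IsSCD 𝕜 (closure (⇑L '' AT)) := isSCD_closure hDne hDR hD
    rw [hcl] at h1
    exact isSCD_of_closure hAne hAR h1
end
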